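/- Let J ⊆ I, a an object, and i_1,...,i_k ∈ J such that the morphism σ_{i_1}···σ_{i_k}^a restricted to ℤ^J is the identity. Then σ_{i_1}···σ_{i_k}^a = id^a on all of ℤ^I. -/

import Mathlib

set_option linter.unusedSectionVars false

/-- A Cartan scheme `C = C(I, A, (ρ_i), (C^a))`. -/
structure CartanScheme (I A : Type) [Fintype I] [DecidableEq I] [Fintype A] [Nonempty A] where
  ρ : I → A → A
  c : A → I → I → ℤ
  ρ_invol : ∀ i a, ρ i (ρ i a) = a
  c_diag : ∀ a i, c a i i = 2
  c_offdiag_nonpos : ∀ a i j, i ≠ j → c a i j ≤ 0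
  c_zero_symm : ∀ a i j, c a i j = 0 → c a j i = 0
  c_rho : ∀ a i j, c (ρ i a) i j = c a i j

namespace CartanScheme

variable {I A : Type} [Fintype I] [DecidableEq I] [Fintype A] [Nonempty A] [DecidableEq A]
variable (C : CartanScheme I A)

/-- The simple reflection `σ_i^a` as a map `ℤ^I → ℤ^I`, `σ_i^a(α_j) = α_j - c^a_{ij} α_i`. -/
def sigma (a : A) (i : I) : (I → ℤ) → (I → ℤ) :=
  fun v k => v k - (if k = i then ∑ j, C.c a i j * v j else 0)

/-- Target object of the word `[i_1, …, i_k]` read at source object `a`: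
`ρ_{i_1} ⋯ ρ_{i_k}(a)`. -/
def wordTarget (a : A) : List I → A
  | [] => a
  | i :: l => C.ρ i (wordTarget a l)

/-- The map `σ_{i_1} ⋯ σ_{i_k}^a : ℤ^I → ℤ^I` determined by a word with source `a`. -/
def wordMap (a : A) : List I → ((I → ℤ) → (I → ℤ))
  | [] => id
  | i :: l => C.sigma (C.wordTarget a l) i ∘ wordMap a l

theorem wordTarget_append (a : A) (l₁ l₂ : List I) :
    C.wordTarget a (l₁ ++ l₂) = C.wordTarget (C.wordTarget a l₂) l₁ := by
  induction l₁ with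
  | nil => rfl
  | cons i l ih => simp [wordTarget, ih]

theorem wordMap_append (a : A) (l₁ l₂ : List I) :
    C.wordMap a (l₁ ++ l₂) = C.wordMap (C.wordTarget a l₂) l₁ ∘ C.wordMap a l₂ := by
  induction l₁ with
  | nil => rfl
  | cons i l ih => simp [wordMap, ih, wordTarget_append, Function.comp_assoc]

/-- A morphism of the Weyl groupoid `W(C)`: a source object, a target object, and a map
`ℤ^I → ℤ^I` which is a composition of simple reflections along some word. -/
@[ext]
structure Mor where
  src : A
  tgt : A
  toFun : (I → ℤ) → (I → ℤ)
  spec : ∃ l : List I, C.wordTarget src l = tgt ∧ C.wordMap src l = toFun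

variable {C}

/-- A word realizes a morphism. -/
def Realizes (w : Mor C) (l : List I) : Prop :=
  C.wordTarget w.src l = w.tgt ∧ C.wordMap w.src l = w.toFun

variable (C)

/-- The identity morphism `id^a`. -/
def idMor (a : A) : Mor C := ⟨a, a, id, ⟨[], rfl, rfl⟩⟩

/-- The generator `σ_i^a ∈ Hom(a, ρ_i(a))`. -/
def genMor (i : I) (a : A) : Mor C :=
  ⟨a, C.ρ i a, C.sigma a i, ⟨[i], rfl, Function.comp_id _⟩⟩

/-- The simple reflection with target `a`, i.e. `id^a σ_i = σ_i^{ρ_i(a)} ∈ Hom(ρ_i(a), a)`. -/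
def sgen (a : A) (i : I) : Mor C :=
  { src := C.ρ i a, tgt := a, toFun := C.sigma (C.ρ i a) i,
    spec := ⟨[i], by simp [wordTarget, C.ρ_invol], Function.comp_id _⟩ }

variable {C}

/-- Composition `u ∘ v` (with `v` applied first); junk value `u` if not composable. -/
def Mor.comp (u v : Mor C) : Mor C :=
  if h : v.tgt = u.src then
    { src := v.src, tgt := u.tgt, toFun := u.toFun ∘ v.toFun,
      spec := by
        obtain ⟨lu, hu1, hu2⟩ := u.spec
        obtain ⟨lv, hv1, hv2⟩ := v.spec
        refine ⟨lu ++ lv, ?_, ?_⟩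
        · rw [C.wordTarget_append, hv1, h, hu1]
        · rw [C.wordMap_append, hv1, h, hu2, hv2] }
  else u

/-- Length of a morphism: minimal length of a realizing word. -/
noncomputable def len (w : Mor C) : ℕ := sInf {k | ∃ l : List I, Realizes w l ∧ l.length = k}

/-- A reduced decomposition. -/
def IsReduced (w : Mor C) (l : List I) : Prop := Realizes w l ∧ l.length = len w

/-- The (right) weak order: `u ≤_R uv` iff `ℓ(uv) = ℓ(u) + ℓ(v)`. -/
def weakLe (u w : Mor C) : Prop :=
  ∃ v : Mor C, v.tgt = u.src ∧ w = u.comp v ∧ len w = len u + len v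

/-- Membership in the parabolic subgroupoid `W_J(C)`. -/
def InParabolic (J : Set I) (w : Mor C) : Prop :=
  ∃ l : List I, (∀ i ∈ l, i ∈ J) ∧ Realizes w l

/-- Length with respect to the generators `σ_j`, `j ∈ J`. -/
noncomputable def lenPar (J : Set I) (w : Mor C) : ℕ :=
  sInf {k | ∃ l : List I, (∀ i ∈ l, i ∈ J) ∧ Realizes w l ∧ l.length = k}

/-- The set of letters occurring in some reduced decomposition of `w`;
by the theorem on reduced decompositions this is the set `J(w)`. -/
def Jset (w : Mor C) : Set I := {i | ∃ l : List I, IsReduced w l ∧ i ∈ l}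

variable (C)

/-- The set of real roots at the object `a`. -/
def roots (a : A) : Set (I → ℤ) :=
  {α | ∃ (b : A) (l : List I) (j : I),
    C.wordTarget b l = a ∧ α = C.wordMap b l (Pi.single j 1)}

/-- The set of positive (real) roots at `a`. -/
def posRoots (a : A) : Set (I → ℤ) := {α ∈ C.roots a | ∀ i, 0 ≤ α i}

/-- `R^re(C)` is a finite root system of type `C`: axioms (R1), (R2), (R4) and finiteness
((R3) holds automatically for real roots). -/
def IsFRS : Prop :=
  (∀ a : A, (C.roots a).Finite) ∧
  (∀ (a : A) (α : I → ℤ), α ∈ C.roots a → (∀ i, 0 ≤ α i) ∨ (∀ i, α i ≤ 0)) ∧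
  (∀ (a : A) (i : I) (α : I → ℤ), α ∈ C.roots a → (∃ z : ℤ, α = z • Pi.single i 1) →
    α = Pi.single i 1 ∨ α = -Pi.single i 1) ∧
  (∀ (a : A) (i j : I), i ≠ j →
    (fun x => C.ρ i (C.ρ j x))^[(C.roots a ∩
      {α | ∃ m n : ℕ, α = (m : ℤ) • Pi.single i 1 + (n : ℤ) • Pi.single j 1}).ncard] a = a)

variable {C}

/-- `I_L(w)`: the set of simple reflections with target `w.tgt` below `w` in weak order. -/
def IL (w : Mor C) : Set I := {i | weakLe (sgen C w.tgt i) w}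

/-- `m` is the longest element of `Hom(-,a) ∩ W_J(C)`, i.e. `w_J` at the object `a`. -/
def IsLongestPar (a : A) (J : Set I) (m : Mor C) : Prop :=
  m.tgt = a ∧ InParabolic J m ∧
    ∀ x : Mor C, x.tgt = a → InParabolic J x → weakLe x m

/-- `m` is the longest element `w_I` of `Hom(-,a)`. -/
def IsLongestAt (a : A) (m : Mor C) : Prop :=
  m.tgt = a ∧ ∀ x : Mor C, x.tgt = a → weakLe x m

/-- `z` is the meet of `x` and `y` in `(Hom(-,a), ≤_R)`. -/
def IsMeet (a : A) (x y z : Mor C) : Prop :=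
  z.tgt = a ∧ weakLe z x ∧ weakLe z y ∧
    ∀ t : Mor C, t.tgt = a → weakLe t x → weakLe t y → weakLe t z

/-- `z` is the join of `x` and `y` in `(Hom(-,a), ≤_R)`. -/
def IsJoin (a : A) (x y z : Mor C) : Prop :=
  z.tgt = a ∧ weakLe x z ∧ weakLe y z ∧
    ∀ t : Mor C, t.tgt = a → weakLe x t → weakLe y t → weakLe z t

/-- The left coset `u W_J(C) ⊆ Hom(-, u.tgt)`. -/
def leftCoset (u : Mor C) (J : Set I) : Set (Mor C) :=
  {x | ∃ v : Mor C, InParabolic J v ∧ v.tgt = u.src ∧ x = u.comp v}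

end CartanScheme

/-!
Let `f` be the map of the word. For `g ∉ J` write `f α_g = α_g + w`; as `f` fixes `ℤ^J`, also
`f⁻¹ α_g = α_g - w` with `w ∈ ℤ^J`. Both are roots with `g`-coordinate `1`, hence positive by (R1),
so `w = 0` and `f = id`.

A word acting as the identity returns to its source object, because a reduced word of such a
morphism is empty: if it started (in order of application) with `σ_j`, the rest would send `α_j`
to `-α_j`, so by the exchange condition it could be rewritten to start with `σ_j` as well, producing
a cancelling pair `σ_j σ_j`. The exchange condition is proved by induction on the length as in
Matsumoto's theorem. Its rank-two input is the braid relation: for `i ≠ j` the roots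
`β_t = (σ_{l_{t-1}} ⋯ σ_{l_0})⁻¹ α_{l_t}` of the alternating word `l` run through the `m` positive
roots in `ℕ α_i + ℕ α_j`, the two alternating words of length `m` send `α_i, α_j` to the same
negative simple roots and so agree as maps, and they have the same target by (R4).
-/

namespace CartanScheme

variable {I A : Type} [Fintype I] [DecidableEq I] [Fintype A] [Nonempty A] [DecidableEq A]
variable (C : CartanScheme I A)

section Linear

theorem sigma_eq (x : A) (i : I) (v : I → ℤ) :
    C.sigma x i v = v - (∑ j, C.c x i j * v j) • Pi.single i 1 := by
  ext k
  by_cases hk : k = i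
  · subst hk; simp [sigma]
  · simp [sigma, hk]

theorem sigma_apply_of_ne (x : A) {i k : I} (v : I → ℤ) (hk : k ≠ i) :
    C.sigma x i v k = v k := by
  simp [sigma, hk]

theorem sigma_single (x : A) (i j : I) :
    C.sigma x i (Pi.single j 1) = Pi.single j 1 - C.c x i j • Pi.single i 1 := by
  simp [sigma_eq, Pi.single_apply]

theorem sigma_single_self (x : A) (i : I) : C.sigma x i (Pi.single i 1) = -Pi.single i 1 := by
  rw [sigma_single, C.c_diag, two_smul, sub_add_cancel_left]

def sigmaLinear (x : A) (i : I) : Module.End ℤ (I → ℤ) where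
  toFun := C.sigma x i
  map_add' u v := by
    simp only [sigma_eq, Pi.add_apply, mul_add, Finset.sum_add_distrib, add_smul]
    abel
  map_smul' z v := by
    simp only [sigma_eq, Pi.smul_apply, smul_eq_mul, RingHom.id_apply, smul_sub, smul_smul,
      Finset.mul_sum, mul_left_comm z]

def wordLinear (x : A) : List I → Module.End ℤ (I → ℤ)
  | [] => 1
  | i :: l => C.sigmaLinear (C.wordTarget x l) i * wordLinear x l

theorem coe_wordLinear (x : A) (l : List I) : ⇑(C.wordLinear x l) = C.wordMap x l := by
  induction l with
  | nil => rfl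
  | cons i l ih => ext v : 1; simp [wordLinear, wordMap, ih, sigmaLinear]

theorem sigma_neg (x : A) (i : I) (v : I → ℤ) : C.sigma x i (-v) = -C.sigma x i v :=
  (C.sigmaLinear x i).map_neg v

theorem wordMap_zero (x : A) (l : List I) : C.wordMap x l 0 = 0 := by
  simp only [← coe_wordLinear, map_zero]

theorem wordMap_add (x : A) (l : List I) (u v : I → ℤ) :
    C.wordMap x l (u + v) = C.wordMap x l u + C.wordMap x l v := by
  simp only [← coe_wordLinear, map_add]

theorem wordMap_sub (x : A) (l : List I) (u v : I → ℤ) :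
    C.wordMap x l (u - v) = C.wordMap x l u - C.wordMap x l v := by
  simp only [← coe_wordLinear, map_sub]

theorem wordMap_neg (x : A) (l : List I) (v : I → ℤ) :
    C.wordMap x l (-v) = -C.wordMap x l v := by
  simp only [← coe_wordLinear, map_neg]

theorem wordMap_smul (x : A) (l : List I) (z : ℤ) (v : I → ℤ) :
    C.wordMap x l (z • v) = z • C.wordMap x l v := by
  simp only [← coe_wordLinear, map_zsmul]

theorem wordMap_eq_id_of_single (x : A) (l : List I)
    (h : ∀ k, C.wordMap x l (Pi.single k 1) = Pi.single k 1) : C.wordMap x l = id := by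
  have : C.wordLinear x l = LinearMap.id :=
    (Pi.basisFun ℤ I).ext fun k => by simpa [coe_wordLinear] using h k
  rw [← coe_wordLinear, this, LinearMap.id_coe]

theorem wordMap_apply_of_notMem {S : Set I} {x : A} {l : List I} (hl : ∀ i ∈ l, i ∈ S)
    (v : I → ℤ) {k : I} (hk : k ∉ S) : C.wordMap x l v k = v k := by
  induction l with
  | nil => rfl
  | cons i l ih =>
    rw [wordMap, Function.comp_apply,
      C.sigma_apply_of_ne _ _ fun h : k = i => hk (h ▸ hl i List.mem_cons_self)]
    exact ih fun g hg => hl g (List.mem_cons_of_mem _ hg)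

end Linear

section Reverse

theorem sigma_rho_sigma (x : A) (i : I) (v : I → ℤ) :
    C.sigma (C.ρ i x) i (C.sigma x i v) = v := by
  have hsum : ∑ j, C.c (C.ρ i x) i j * C.sigma x i v j = -∑ j, C.c x i j * v j := by
    simp only [C.c_rho, sigma_eq, Pi.sub_apply, Pi.smul_apply, smul_eq_mul, mul_sub,
      Finset.sum_sub_distrib, Pi.single_apply, mul_ite, mul_one, mul_zero, Finset.sum_ite_eq',
      Finset.mem_univ, if_true, C.c_diag]
    ring
  rw [C.sigma_eq (C.ρ i x), hsum, sigma_eq, neg_smul, sub_neg_eq_add, sub_add_cancel]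

theorem wordTarget_reverse (x : A) (l : List I) :
    C.wordTarget (C.wordTarget x l) l.reverse = x := by
  induction l generalizing x with
  | nil => rfl
  | cons i l ih =>
    rw [List.reverse_cons, wordTarget_append]
    simpa [wordTarget, C.ρ_invol] using ih x

theorem wordMap_reverse_wordMap (x : A) (l : List I) (v : I → ℤ) :
    C.wordMap (C.wordTarget x l) l.reverse (C.wordMap x l v) = v := by
  induction l generalizing x v with
  | nil => rfl
  | cons i l ih =>
    rw [List.reverse_cons, wordMap_append]
    simpa [wordTarget, wordMap, sigma_rho_sigma, C.ρ_invol] using ih x v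

theorem wordMap_wordMap_reverse (x : A) (l : List I) (v : I → ℤ) :
    C.wordMap x l (C.wordMap (C.wordTarget x l) l.reverse v) = v := by
  simpa [C.wordTarget_reverse] using C.wordMap_reverse_wordMap (C.wordTarget x l) l.reverse v

theorem wordMap_reverse_cons (x : A) (g : I) (l : List I) (v : I → ℤ) :
    C.wordMap (C.wordTarget x (g :: l)) (g :: l).reverse v =
      C.wordMap (C.wordTarget x l) l.reverse (C.sigma (C.wordTarget x (g :: l)) g v) := by
  rw [List.reverse_cons, wordMap_append]
  simp [wordTarget, wordMap, C.ρ_invol]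

theorem wordMap_injective (x : A) (l : List I) : Function.Injective (C.wordMap x l) :=
  Function.LeftInverse.injective (C.wordMap_reverse_wordMap x l)

end Reverse

section Roots

theorem single_mem_roots (x : A) (j : I) : Pi.single j (1 : ℤ) ∈ C.roots x :=
  ⟨x, [], j, rfl, rfl⟩

theorem wordMap_mem_roots {x : A} {α : I → ℤ} (hα : α ∈ C.roots x) (l : List I) :
    C.wordMap x l α ∈ C.roots (C.wordTarget x l) := by
  obtain ⟨b, m, j, rfl, rfl⟩ := hα
  exact ⟨b, l ++ m, j, C.wordTarget_append b l m, by rw [wordMap_append]; rfl⟩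

theorem sigma_mem_roots {x : A} {α : I → ℤ} (hα : α ∈ C.roots x) (i : I) :
    C.sigma x i α ∈ C.roots (C.ρ i x) :=
  C.wordMap_mem_roots hα [i]

theorem neg_mem_roots {x : A} {α : I → ℤ} (hα : α ∈ C.roots x) : -α ∈ C.roots x := by
  obtain ⟨b, m, j, rfl, rfl⟩ := hα
  have := C.wordMap_mem_roots (C.sigma_mem_roots (C.single_mem_roots (C.ρ j b) j) j) m
  simpa [C.ρ_invol, sigma_single_self, wordMap_neg] using this

theorem ne_zero_of_mem_roots {x : A} {α : I → ℤ} (hα : α ∈ C.roots x) : α ≠ 0 := by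
  obtain ⟨b, m, j, rfl, rfl⟩ := hα
  intro h
  have := C.wordMap_injective b m (h.trans (C.wordMap_zero b m).symm)
  simpa using congrFun this j

end Roots

variable {C}

section FiniteRootSystem

theorem IsFRS.nonneg_or_nonpos (hC : C.IsFRS) {x : A} {α : I → ℤ} (hα : α ∈ C.roots x) :
    0 ≤ α ∨ α ≤ 0 :=
  hC.2.1 x α hα

theorem IsFRS.nonneg_of_pos_apply (hC : C.IsFRS) {x : A} {α : I → ℤ} (hα : α ∈ C.roots x)
    {k : I} (hk : 0 < α k) : 0 ≤ α :=
  (hC.nonneg_or_nonpos hα).resolve_right fun h => (h k).not_gt hk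

theorem IsFRS.eq_single_of_nonneg (hC : C.IsFRS) {x : A} {α : I → ℤ} (hα : α ∈ C.roots x)
    (h0 : 0 ≤ α) {g : I} (hg : ∀ k, k ≠ g → α k = 0) : α = Pi.single g 1 := by
  have hform : α = α g • Pi.single g 1 := by
    ext k
    by_cases hk : k = g
    · subst hk; simp
    · simp [hg k hk, hk]
  rcases hC.2.2.1 x g α hα ⟨_, hform⟩ with h | h
  · exact h
  · have := h0 g
    simp [h] at this

theorem IsFRS.sigma_nonneg (hC : C.IsFRS) {x : A} {α : I → ℤ} {g : I} (hα : α ∈ C.roots x)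
    (h0 : 0 ≤ α) (hne : α ≠ Pi.single g 1) : 0 ≤ C.sigma x g α := by
  by_contra hneg
  refine hne (hC.eq_single_of_nonneg hα h0 fun k hk => le_antisymm ?_ (h0 k))
  by_contra hpos
  exact hneg (hC.nonneg_of_pos_apply (C.sigma_mem_roots hα g) (k := k)
    (by rw [C.sigma_apply_of_ne _ _ hk]; exact not_le.mp hpos))

theorem IsFRS.sigma_nonpos (hC : C.IsFRS) {x : A} {α : I → ℤ} {g : I} (hα : α ∈ C.roots x)
    (h0 : α ≤ 0) (hne : α ≠ -Pi.single g 1) : C.sigma x g α ≤ 0 := by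
  have := hC.sigma_nonneg (C.neg_mem_roots hα) (neg_nonneg.mpr h0) fun h => hne (by
    rw [← h, neg_neg])
  rwa [C.sigma_neg, neg_nonneg] at this

theorem IsFRS.wordMap_eq_id_of_eqOn_span (hC : C.IsFRS) {S : Set I} {x : A} {l : List I}
    (hl : ∀ i ∈ l, i ∈ S) (hfix : ∀ v : I → ℤ, (∀ i, i ∉ S → v i = 0) → C.wordMap x l v = v) :
    C.wordMap x l = id := by
  refine C.wordMap_eq_id_of_single x l fun g => ?_
  by_cases hg : g ∈ S
  · exact hfix _ fun i hi => Pi.single_eq_of_ne (fun h : i = g => hi (h ▸ hg)) 1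
  -- `f α_g = α_g + w` and `f⁻¹ α_g = α_g - w` with `w ∈ ℤ^S` are both positive roots
  set w := C.wordMap x l (Pi.single g 1) - Pi.single g 1 with hw_def
  have hw : ∀ i, i ∉ S → w i = 0 := fun i hi => by
    simp [w, C.wordMap_apply_of_notMem hl _ hi]
  have hinv : C.wordMap (C.wordTarget x l) l.reverse (Pi.single g 1) = Pi.single g 1 - w := by
    have : Pi.single g 1 = C.wordMap x l (Pi.single g 1 - w) := by
      rw [wordMap_sub, hfix w hw, hw_def, sub_sub_cancel]
    rw [this, wordMap_reverse_wordMap, ← this]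
  have hwg : w g = 0 := hw g hg
  have hplus : 0 ≤ Pi.single g 1 + w := by
    refine hC.nonneg_of_pos_apply (x := C.wordTarget x l) (k := g) ?_ (by simp [hwg])
    simpa [w] using C.wordMap_mem_roots (C.single_mem_roots x g) l
  have hminus : 0 ≤ Pi.single g 1 - w := by
    refine hC.nonneg_of_pos_apply (x := x) (k := g) ?_ (by simp [hwg])
    simpa [hinv, wordTarget_reverse] using
      C.wordMap_mem_roots (C.single_mem_roots (C.wordTarget x l) g) l.reverse
  have hw0 : w = 0 := by
    ext k
    by_cases hk : k = g
    · subst hk; exact hwg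
    · have h1 := hplus k
      have h2 := hminus k
      simp only [Pi.add_apply, Pi.sub_apply, Pi.zero_apply, Pi.single_eq_of_ne hk] at h1 h2 ⊢
      omega
  exact sub_eq_zero.mp hw0

theorem IsFRS.wordMap_eq_of_eqOn_span (hC : C.IsFRS) {S : Set I} {x : A} {l₁ l₂ : List I}
    (h₁ : ∀ i ∈ l₁, i ∈ S) (h₂ : ∀ i ∈ l₂, i ∈ S)
    (heq : ∀ v : I → ℤ, (∀ i, i ∉ S → v i = 0) → C.wordMap x l₁ v = C.wordMap x l₂ v) :
    C.wordMap x l₁ = C.wordMap x l₂ := by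
  have h₂' : ∀ i ∈ l₂.reverse, i ∈ S := fun i hi => h₂ i (List.mem_reverse.mp hi)
  have hid : C.wordMap (C.wordTarget x l₂) (l₁ ++ l₂.reverse) = id := by
    refine hC.wordMap_eq_id_of_eqOn_span (S := S) (fun i hi => ?_) fun v hv => ?_
    · exact (List.mem_append.mp hi).elim (h₁ i) (h₂' i)
    · have hv' : ∀ i, i ∉ S → C.wordMap (C.wordTarget x l₂) l₂.reverse v i = 0 := fun i hi => by
        rw [C.wordMap_apply_of_notMem h₂' _ hi, hv i hi]
      rw [wordMap_append, wordTarget_reverse, Function.comp_apply, heq _ hv',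
        wordMap_wordMap_reverse]
  funext v
  simpa [wordMap_append, wordTarget_reverse, wordMap_reverse_wordMap] using
    congrFun hid (C.wordMap x l₂ v)

end FiniteRootSystem

section AlternatingWords

variable (C)

def altLetter (i j : I) (t : ℕ) : I := if Even t then i else j

/-- The alternating word `⋯ σ_i σ_j σ_i` of length `t`; its last letter `i` acts first. -/
def altWord (i j : I) : ℕ → List I
  | 0 => []
  | t + 1 => altLetter i j t :: altWord i j t

theorem altLetter_succ (i j : I) (t : ℕ) : altLetter i j (t + 1) = altLetter j i t := by
  by_cases ht : Even t <;> simp [altLetter, ht, Nat.even_add_one]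

theorem altLetter_add_two (i j : I) (t : ℕ) : altLetter i j (t + 2) = altLetter i j t := by
  rw [altLetter_succ, altLetter_succ]

theorem altLetter_succ_ne {i j : I} (hij : i ≠ j) (t : ℕ) :
    altLetter i j (t + 1) ≠ altLetter i j t := by
  by_cases ht : Even t <;> simp [altLetter, ht, Nat.even_add_one, hij, hij.symm]

theorem altLetter_mem (i j : I) (t : ℕ) : altLetter i j t ∈ ({i, j} : Set I) := by
  by_cases ht : Even t <;> simp [altLetter, ht]

theorem mem_altWord {i j g : I} {t : ℕ} (hg : g ∈ altWord i j t) : g ∈ ({i, j} : Set I) := by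
  induction t with
  | zero => simp [altWord] at hg
  | succ t ih =>
    rcases List.mem_cons.mp hg with rfl | hg
    exacts [altLetter_mem i j t, ih hg]

theorem length_altWord (i j : I) (t : ℕ) : (altWord i j t).length = t := by
  induction t with
  | zero => rfl
  | succ t ih => simp [altWord, ih]

theorem altWord_succ_eq_append (i j : I) (t : ℕ) :
    altWord i j (t + 1) = altWord j i t ++ [i] := by
  induction t generalizing i j with
  | zero => rfl
  | succ t ih => rw [altWord, ih, altWord, altLetter_succ]; rfl

theorem wordTarget_altWord_succ (x : A) (i j : I) (t : ℕ) :
    C.wordTarget x (altWord i j (t + 1)) = C.wordTarget (C.ρ i x) (altWord j i t) := by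
  rw [altWord_succ_eq_append, wordTarget_append]; rfl

theorem wordTarget_altWord_swap (x : A) (i j : I) (t : ℕ) :
    C.wordTarget x (altWord j i t) =
      C.wordTarget ((fun z => C.ρ i (C.ρ j z))^[t] x) (altWord i j t) := by
  induction t generalizing x i j with
  | zero => rfl
  | succ t ih =>
    have hsemi : Function.Semiconj (C.ρ j) (fun z => C.ρ i (C.ρ j z)) (fun z => C.ρ j (C.ρ i z)) :=
      fun _ => rfl
    rw [wordTarget_altWord_succ, wordTarget_altWord_succ, ih, ← (hsemi.iterate_right t).eq,
      Function.iterate_succ_apply', C.ρ_invol]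

end AlternatingWords

section PairCoordinates

def det2 (i j : I) (u v : I → ℤ) : ℤ := u i * v j - u j * v i

theorem eq_det2_smul_add {i j : I} (hij : i ≠ j) {u v w : I → ℤ}
    (hu : ∀ k, k ∉ ({i, j} : Set I) → u k = 0) (hv : ∀ k, k ∉ ({i, j} : Set I) → v k = 0)
    (hw : ∀ k, k ∉ ({i, j} : Set I) → w k = 0) (h : det2 i j u v = 1) :
    w = det2 i j w v • u + det2 i j u w • v := by
  unfold det2 at h ⊢
  ext k
  simp only [Pi.add_apply, Pi.smul_apply, smul_eq_mul]
  by_cases hki : k = i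
  · subst hki; linear_combination (-w k) * h
  by_cases hkj : k = j
  · subst hkj; linear_combination (-w k) * h
  have hk : k ∉ ({i, j} : Set I) := by simp [hki, hkj]
  simp [hu k hk, hv k hk, hw k hk]

theorem eq_smul_single_add_smul_single {i j : I} (hij : i ≠ j) {v : I → ℤ}
    (hv : ∀ k, k ∉ ({i, j} : Set I) → v k = 0) :
    v = v i • Pi.single i 1 + v j • Pi.single j 1 := by
  ext k
  by_cases hki : k = i
  · subst hki; simp [hij]
  by_cases hkj : k = j
  · subst hkj; simp [Ne.symm hij]
  simp [hki, hkj, hv k (by simp [hki, hkj])]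

end PairCoordinates

section RankTwo

variable (C)

/-- The set counted in axiom (R4). -/
def rankTwoPosRoots (x : A) (i j : I) : Set (I → ℤ) :=
  C.roots x ∩ {α | ∃ m n : ℕ, α = (m : ℤ) • Pi.single i 1 + (n : ℤ) • Pi.single j 1}

theorem mem_rankTwoPosRoots {x : A} {i j : I} (hij : i ≠ j) {α : I → ℤ} :
    α ∈ C.rankTwoPosRoots x i j ↔
      α ∈ C.roots x ∧ 0 ≤ α ∧ ∀ k, k ∉ ({i, j} : Set I) → α k = 0 := by
  refine and_congr_right fun _ => ⟨?_, fun ⟨h0, hsupp⟩ => ⟨(α i).toNat, (α j).toNat, ?_⟩⟩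
  · rintro ⟨m, n, rfl⟩
    refine ⟨fun k => ?_, fun k hk => ?_⟩
    · simp only [Pi.zero_apply, Pi.add_apply, Pi.smul_apply, smul_eq_mul, Pi.single_apply]
      split_ifs <;> positivity
    · simp only [Set.mem_insert_iff, Set.mem_singleton_iff, not_or] at hk
      simp [hk.1, hk.2]
  · ext k
    by_cases hki : k = i
    · subst hki; simpa [hij] using h0 k
    by_cases hkj : k = j
    · subst hkj; simpa [Ne.symm hij] using h0 k
    simp [hki, hkj, hsupp k (by simp [hki, hkj])]

theorem rankTwoPosRoots_comm (x : A) (i j : I) :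
    C.rankTwoPosRoots x j i = C.rankTwoPosRoots x i j := by
  ext α
  simp only [rankTwoPosRoots, Set.mem_inter_iff, Set.mem_ofPred_eq]
  exact and_congr_right fun _ => ⟨fun ⟨m, n, h⟩ => ⟨n, m, h.trans (add_comm _ _)⟩,
    fun ⟨m, n, h⟩ => ⟨n, m, h.trans (add_comm _ _)⟩⟩

/-- `β_t = (σ_{l_{t-1}} ⋯ σ_{l_0})⁻¹ α_{l_t}` with `l_s = altLetter i j s`; up to the chain length
these are exactly the positive roots in `ℕ α_i + ℕ α_j`. -/
def altRoot (x : A) (i j : I) (t : ℕ) : I → ℤ :=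
  C.wordMap (C.wordTarget x (altWord i j t)) (altWord i j t).reverse
    (Pi.single (altLetter i j t) 1)

theorem altRoot_zero (x : A) (i j : I) : C.altRoot x i j 0 = Pi.single i 1 := rfl

theorem altRoot_mem_roots (x : A) (i j : I) (t : ℕ) : C.altRoot x i j t ∈ C.roots x := by
  have := C.wordMap_mem_roots
    (C.single_mem_roots (C.wordTarget x (altWord i j t)) (altLetter i j t)) (altWord i j t).reverse
  rwa [C.wordTarget_reverse] at this

theorem altRoot_apply_of_notMem (x : A) {i j k : I} (t : ℕ) (hk : k ∉ ({i, j} : Set I)) :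
    C.altRoot x i j t k = 0 := by
  rw [altRoot, C.wordMap_apply_of_notMem (fun g hg => mem_altWord (List.mem_reverse.mp hg)) _ hk,
    Pi.single_eq_of_ne fun h : k = altLetter i j t => hk (h ▸ altLetter_mem i j t)]

theorem wordMap_altWord_altRoot (x : A) (i j : I) (t : ℕ) :
    C.wordMap x (altWord i j t) (C.altRoot x i j t) = Pi.single (altLetter i j t) 1 :=
  C.wordMap_wordMap_reverse x _ _

theorem wordMap_altWord_succ_altRoot (x : A) (i j : I) (t : ℕ) :
    C.wordMap x (altWord i j (t + 1)) (C.altRoot x i j t) = -Pi.single (altLetter i j t) 1 := by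
  rw [altWord, wordMap, Function.comp_apply, wordMap_altWord_altRoot, sigma_single_self]

theorem exists_altRoot_succ (x : A) (i j : I) (t : ℕ) : ∃ c : ℤ,
    C.altRoot x i j (t + 1) = C.wordMap (C.wordTarget x (altWord i j t)) (altWord i j t).reverse
      (Pi.single (altLetter i j (t + 1)) 1) - c • C.altRoot x i j t :=
  ⟨_, by rw [altRoot, altWord, wordMap_reverse_cons, sigma_single, wordMap_sub, wordMap_smul]; rfl⟩

theorem det2_altRoot_succ {i j : I} (hij : i ≠ j) (x : A) (t : ℕ) :
    det2 i j (C.altRoot x i j t) (C.altRoot x i j (t + 1)) = 1 := by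
  induction t with
  | zero =>
    obtain ⟨c, hc⟩ := C.exists_altRoot_succ x i j 0
    simp [hc, altRoot_zero, det2, Ne.symm hij, altLetter, altWord, wordMap]
  | succ t ih =>
    obtain ⟨c, hc⟩ := C.exists_altRoot_succ x i j (t + 1)
    have hback : C.wordMap (C.wordTarget x (altWord i j (t + 1))) (altWord i j (t + 1)).reverse
        (Pi.single (altLetter i j (t + 2)) 1) = -C.altRoot x i j t := by
      rw [altLetter_add_two, altWord, wordMap_reverse_cons, sigma_single_self, wordMap_neg]
      rfl
    rw [hc, hback]
    unfold det2 at ih ⊢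
    simp only [Pi.sub_apply, Pi.neg_apply, Pi.smul_apply, smul_eq_mul]
    linear_combination ih

theorem wordMap_altWord_succ_eq {i j : I} (hij : i ≠ j) (x : A) (P : ℕ) {γ : I → ℤ}
    (hγ : ∀ k, k ∉ ({i, j} : Set I) → γ k = 0) :
    C.wordMap x (altWord i j (P + 1)) γ =
      det2 i j (C.altRoot x i j P) γ • Pi.single (altLetter i j (P + 1)) 1 -
        det2 i j γ (C.altRoot x i j (P + 1)) • Pi.single (altLetter i j P) 1 := by
  conv_lhs => rw [eq_det2_smul_add hij (fun k hk => C.altRoot_apply_of_notMem x P hk)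
    (fun k hk => C.altRoot_apply_of_notMem x (P + 1) hk) hγ (C.det2_altRoot_succ hij x P)]
  rw [wordMap_add, wordMap_smul, wordMap_smul, wordMap_altWord_succ_altRoot,
    wordMap_altWord_altRoot, smul_neg]
  abel

theorem single_left_mem_rankTwoPosRoots (x : A) (i j : I) :
    Pi.single i 1 ∈ C.rankTwoPosRoots x i j :=
  ⟨C.single_mem_roots x i, 1, 0, by simp⟩

theorem single_right_mem_rankTwoPosRoots (x : A) (i j : I) :
    Pi.single j 1 ∈ C.rankTwoPosRoots x i j :=
  ⟨C.single_mem_roots x j, 0, 1, by simp⟩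

theorem wordMap_nonpos_of_nonneg {i j : I} (hij : i ≠ j) {x : A} {l : List I}
    (hi : C.wordMap x l (Pi.single i 1) ≤ 0) (hj : C.wordMap x l (Pi.single j 1) ≤ 0)
    {v : I → ℤ} (hv0 : 0 ≤ v) (hv : ∀ k, k ∉ ({i, j} : Set I) → v k = 0) :
    C.wordMap x l v ≤ 0 := by
  rw [eq_smul_single_add_smul_single hij hv, wordMap_add, wordMap_smul, wordMap_smul]
  exact add_nonpos (smul_nonpos_of_nonneg_of_nonpos (hv0 i) hi)
    (smul_nonpos_of_nonneg_of_nonpos (hv0 j) hj)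

def IsChainLength (x : A) (i j : I) (M : ℕ) : Prop :=
  (∀ t < M, 0 ≤ C.altRoot x i j t) ∧ ¬ 0 ≤ C.altRoot x i j M

variable {C}

theorem IsChainLength.ne_zero {x : A} {i j : I} {M : ℕ} (hM : C.IsChainLength x i j M) :
    M ≠ 0 := by
  rintro rfl
  exact hM.2 (by simp [altRoot_zero])

theorem IsFRS.iterate_ncard_rankTwoPosRoots (hC : C.IsFRS) (x : A) {i j : I} (hij : i ≠ j) :
    (fun z => C.ρ i (C.ρ j z))^[(C.rankTwoPosRoots x i j).ncard] x = x :=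
  hC.2.2.2 x i j hij

theorem IsFRS.wordMap_altWord_altRoot_nonpos (hC : C.IsFRS) {x : A} {i j : I} {M : ℕ}
    (hpos : ∀ t < M, 0 ≤ C.altRoot x i j t) {t s : ℕ} (hts : t < s) (hsM : s ≤ M) :
    C.wordMap x (altWord i j s) (C.altRoot x i j t) ≤ 0 := by
  induction s, hts using Nat.le_induction with
  | base => simp [wordMap_altWord_succ_altRoot]
  | succ s hts ih =>
    rw [altWord, wordMap, Function.comp_apply]
    refine hC.sigma_nonpos (C.wordMap_mem_roots (C.altRoot_mem_roots x i j t) _) (ih (by omega))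
      fun h => ?_
    have heq : C.altRoot x i j t = -C.altRoot x i j s :=
      C.wordMap_injective x _ (by rw [h, wordMap_neg, wordMap_altWord_altRoot])
    refine C.ne_zero_of_mem_roots (C.altRoot_mem_roots x i j t) (le_antisymm ?_ (hpos t (by omega)))
    rw [heq]
    exact neg_nonpos.mpr (hpos s (by omega))

theorem IsFRS.altRoot_injOn (hC : C.IsFRS) {x : A} {i j : I} {M : ℕ}
    (hpos : ∀ t < M, 0 ≤ C.altRoot x i j t) : Set.InjOn (C.altRoot x i j) (Set.Iio M) := by
  -- `altWord i j t` sends `β_t` to a simple root, but every earlier `β_s` to a negative root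
  have key : ∀ s t, s < t → t < M → C.altRoot x i j s ≠ C.altRoot x i j t := fun s t hst htM h => by
    have := hC.wordMap_altWord_altRoot_nonpos hpos hst htM.le (altLetter i j t)
    simp [h, wordMap_altWord_altRoot] at this
  intro s hs t ht h
  rcases lt_trichotomy s t with hst | rfl | hst
  exacts [(key s t hst ht h).elim, rfl, (key t s hst hs h.symm).elim]

theorem IsFRS.exists_isChainLength (hC : C.IsFRS) (x : A) (i j : I) :
    ∃ M, C.IsChainLength x i j M := by
  classical
  have hex : ∃ M, ¬ 0 ≤ C.altRoot x i j M := by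
    by_contra! hall
    refine (hC.1 x).not_infinite (Set.infinite_of_injective_forall_mem
      (fun s t h => ?_) (C.altRoot_mem_roots x i j))
    exact hC.altRoot_injOn (M := max s t + 1) (fun r _ => hall r)
      (Nat.lt_succ_of_le (le_max_left s t)) (Nat.lt_succ_of_le (le_max_right s t)) h
  exact ⟨Nat.find hex, fun t ht => not_not.mp (Nat.find_min hex ht), Nat.find_spec hex⟩

theorem IsFRS.not_nonneg_wordMap_altWord (hC : C.IsFRS) {x : A} {i j : I} (hij : i ≠ j) {M : ℕ}
    (hM : C.IsChainLength x i j M) {γ : I → ℤ} (hγ : γ ∈ C.rankTwoPosRoots x i j) :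
    ¬ 0 ≤ C.wordMap x (altWord i j M) γ := by
  obtain ⟨P, rfl⟩ := Nat.exists_eq_succ_of_ne_zero hM.ne_zero
  obtain ⟨hroot, h0, hsupp⟩ := (C.mem_rankTwoPosRoots hij).mp hγ
  intro hV
  rw [C.wordMap_altWord_succ_eq hij x P hsupp] at hV
  have hr : 0 ≤ det2 i j (C.altRoot x i j P) γ := by
    simpa [altLetter_succ_ne hij P] using hV (altLetter i j (P + 1))
  have hs : det2 i j γ (C.altRoot x i j (P + 1)) ≤ 0 := by
    simpa [(altLetter_succ_ne hij P).symm] using hV (altLetter i j P)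
  have hneg : C.altRoot x i j (P + 1) ≤ 0 :=
    (hC.nonneg_or_nonpos (C.altRoot_mem_roots x i j _)).resolve_left hM.2
  -- by Cramer's rule `γ = s β_P + r β_{P+1}` with `s ≤ 0 ≤ r`, so `γ ≤ 0`
  have hγ_eq := eq_det2_smul_add hij (fun k hk => C.altRoot_apply_of_notMem x P hk)
    (fun k hk => C.altRoot_apply_of_notMem x (P + 1) hk) hsupp (C.det2_altRoot_succ hij x P)
  refine C.ne_zero_of_mem_roots hroot (le_antisymm (fun k => ?_) h0)
  have h1 := hM.1 P (by omega) k
  have h2 := hneg k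
  rw [hγ_eq]
  simp only [Pi.add_apply, Pi.smul_apply, smul_eq_mul, Pi.zero_apply] at h1 h2 ⊢
  nlinarith

theorem IsFRS.exists_altRoot_eq (hC : C.IsFRS) {x : A} {i j : I} (hij : i ≠ j) {M : ℕ}
    (hM : C.IsChainLength x i j M) {γ : I → ℤ} (hγ : γ ∈ C.rankTwoPosRoots x i j) :
    ∃ t < M, C.altRoot x i j t = γ := by
  obtain ⟨hroot, h0, -⟩ := (C.mem_rankTwoPosRoots hij).mp hγ
  by_contra! hne
  suffices ∀ t ≤ M, 0 ≤ C.wordMap x (altWord i j t) γ from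
    hC.not_nonneg_wordMap_altWord hij hM hγ (this M le_rfl)
  intro t ht
  induction t with
  | zero => exact h0
  | succ t ih =>
    rw [altWord, wordMap, Function.comp_apply]
    refine hC.sigma_nonneg (C.wordMap_mem_roots hroot _) (ih (by omega)) fun h => ?_
    exact hne t (by omega)
      (C.wordMap_injective x _ ((C.wordMap_altWord_altRoot x i j t).trans h.symm))

theorem IsFRS.ncard_rankTwoPosRoots (hC : C.IsFRS) {x : A} {i j : I} (hij : i ≠ j) {M : ℕ}
    (hM : C.IsChainLength x i j M) : (C.rankTwoPosRoots x i j).ncard = M := by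
  have : C.rankTwoPosRoots x i j = C.altRoot x i j '' Set.Iio M := by
    ext γ
    refine ⟨fun hγ => hC.exists_altRoot_eq hij hM hγ, ?_⟩
    rintro ⟨t, ht, rfl⟩
    exact (C.mem_rankTwoPosRoots hij).mpr ⟨C.altRoot_mem_roots x i j t, hM.1 t ht,
      fun k hk => C.altRoot_apply_of_notMem x t hk⟩
  rw [this, (hC.altRoot_injOn hM.1).ncard_image, Set.ncard_Iio_nat]

theorem IsFRS.altRoot_eq_single_right (hC : C.IsFRS) {x : A} {i j : I} (hij : i ≠ j) {P : ℕ}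
    (hM : C.IsChainLength x i j (P + 1)) : C.altRoot x i j P = Pi.single j 1 := by
  obtain ⟨-, -, hsupp⟩ := (C.mem_rankTwoPosRoots hij).mp (C.single_right_mem_rankTwoPosRoots x i j)
  have hV := (hC.nonneg_or_nonpos (C.wordMap_mem_roots (C.single_mem_roots x j) _)).resolve_left
    (hC.not_nonneg_wordMap_altWord hij hM (C.single_right_mem_rankTwoPosRoots x i j))
  rw [C.wordMap_altWord_succ_eq hij x P hsupp] at hV
  have hi : C.altRoot x i j P i ≤ 0 := by
    simpa [det2, hij, altLetter_succ_ne hij P] using hV (altLetter i j (P + 1))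
  refine hC.eq_single_of_nonneg (C.altRoot_mem_roots x i j P) (hM.1 P (by omega)) fun k hk => ?_
  by_cases hki : k = i
  · subst hki; exact le_antisymm hi (hM.1 P (by omega) k)
  · exact C.altRoot_apply_of_notMem x P (by simp [hki, hk])

theorem IsFRS.wordMap_altWord_single_right (hC : C.IsFRS) {x : A} {i j : I} (hij : i ≠ j)
    {P : ℕ} (hM : C.IsChainLength x i j (P + 1)) :
    C.wordMap x (altWord i j (P + 1)) (Pi.single j 1) = -Pi.single (altLetter i j P) 1 := by
  rw [← hC.altRoot_eq_single_right hij hM, wordMap_altWord_succ_altRoot]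

theorem IsFRS.wordMap_altWord_single_left (hC : C.IsFRS) {x : A} {i j : I} (hij : i ≠ j)
    {P : ℕ} (hM : C.IsChainLength x i j (P + 1)) :
    C.wordMap x (altWord i j (P + 1)) (Pi.single i 1) = -Pi.single (altLetter i j (P + 1)) 1 := by
  obtain ⟨-, -, hsupp⟩ := (C.mem_rankTwoPosRoots hij).mp (C.single_left_mem_rankTwoPosRoots x i j)
  have hV := C.wordMap_altWord_succ_eq hij x P hsupp
  simp only [hC.altRoot_eq_single_right hij hM, det2, Pi.single_eq_same,
    Pi.single_eq_of_ne hij, Pi.single_eq_of_ne (Ne.symm hij)] at hV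
  have hneg : C.altRoot x i j (P + 1) ≤ 0 :=
    (hC.nonneg_or_nonpos (C.altRoot_mem_roots x i j _)).resolve_left hM.2
  -- `β_0 = α_i` is sent to a negative root; this forces the `α_j`-coordinate of `β_{P+1}` to vanish
  have hVneg : C.wordMap x (altWord i j (P + 1)) (Pi.single i 1) ≤ 0 :=
    hC.wordMap_altWord_altRoot_nonpos (t := 0) hM.1 (Nat.succ_pos P) le_rfl
  have hb : 0 ≤ C.altRoot x i j (P + 1) j := by
    simpa [hV, (altLetter_succ_ne hij P).symm] using hVneg (altLetter i j P)
  rw [hV, le_antisymm (hneg j) hb]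
  simp

theorem IsFRS.wordMap_altWord_comm (hC : C.IsFRS) {x : A} {i j : I} (hij : i ≠ j) {M : ℕ}
    (hM : C.IsChainLength x i j M) :
    C.wordMap x (altWord j i M) = C.wordMap x (altWord i j M) := by
  obtain ⟨M', hM'⟩ := hC.exists_isChainLength x j i
  obtain rfl : M' = M := by
    rw [← hC.ncard_rankTwoPosRoots hij.symm hM', rankTwoPosRoots_comm,
      hC.ncard_rankTwoPosRoots hij hM]
  obtain ⟨P, rfl⟩ := Nat.exists_eq_succ_of_ne_zero hM.ne_zero
  -- both words send `α_i` and `α_j` to the same negative simple roots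
  refine hC.wordMap_eq_of_eqOn_span (S := {i, j})
    (fun _ hg => Set.pair_comm j i ▸ mem_altWord hg) (fun _ hg => mem_altWord hg) fun v hv => ?_
  rw [eq_smul_single_add_smul_single hij hv]
  simp only [wordMap_add, wordMap_smul, hC.wordMap_altWord_single_left hij hM,
    hC.wordMap_altWord_single_right hij hM, hC.wordMap_altWord_single_left hij.symm hM',
    hC.wordMap_altWord_single_right hij.symm hM', altLetter_succ]

theorem IsFRS.wordTarget_altWord_comm (hC : C.IsFRS) {x : A} {i j : I} (hij : i ≠ j) {M : ℕ}
    (hM : C.IsChainLength x i j M) :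
    C.wordTarget x (altWord j i M) = C.wordTarget x (altWord i j M) := by
  have hR4 := hC.iterate_ncard_rankTwoPosRoots x hij
  rw [hC.ncard_rankTwoPosRoots hij hM] at hR4
  rw [wordTarget_altWord_swap, hR4]

end RankTwo

section Exchange

variable (C)

def wordMor (x : A) (l : List I) : Mor C := ⟨x, C.wordTarget x l, C.wordMap x l, l, rfl, rfl⟩

variable {C}

theorem wordMor_eq_iff {x : A} {l l' : List I} :
    C.wordMor x l = C.wordMor x l' ↔
      C.wordMap x l = C.wordMap x l' ∧ C.wordTarget x l = C.wordTarget x l' := by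
  simp [wordMor, Mor.ext_iff, and_comm]

theorem wordMor_append_left {x : A} {X X' Y : List I}
    (h : C.wordMor (C.wordTarget x Y) X = C.wordMor (C.wordTarget x Y) X') :
    C.wordMor x (X ++ Y) = C.wordMor x (X' ++ Y) := by
  rw [wordMor_eq_iff] at h ⊢
  rw [wordMap_append, wordMap_append, wordTarget_append, wordTarget_append, h.1, h.2]
  exact ⟨rfl, rfl⟩

theorem wordMor_append_right {x : A} {X Y Y' : List I} (h : C.wordMor x Y = C.wordMor x Y') :
    C.wordMor x (X ++ Y) = C.wordMor x (X ++ Y') := by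
  rw [wordMor_eq_iff] at h ⊢
  rw [wordMap_append, wordMap_append, wordTarget_append, wordTarget_append, h.1, h.2]
  exact ⟨rfl, rfl⟩

theorem wordMor_append_pair (x : A) (p : List I) (g : I) :
    C.wordMor x (p ++ [g, g]) = C.wordMor x p := by
  have hpair : C.wordMor x [g, g] = C.wordMor x [] := by
    rw [wordMor_eq_iff]
    exact ⟨funext fun v => C.sigma_rho_sigma x g v, C.ρ_invol g x⟩
  simpa using wordMor_append_right (X := p) hpair

theorem realizes_wordMor_iff {x : A} {l l' : List I} :
    Realizes (C.wordMor x l) l' ↔ C.wordMor x l' = C.wordMor x l := by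
  rw [wordMor_eq_iff, and_comm]
  rfl

theorem isReduced_iff {w : Mor C} {l : List I} :
    IsReduced w l ↔ Realizes w l ∧ ∀ l', Realizes w l' → l.length ≤ l'.length := by
  refine ⟨fun ⟨hl, hlen⟩ => ⟨hl, fun l' hl' => hlen ▸ Nat.sInf_le ⟨l', hl', rfl⟩⟩,
    fun ⟨hl, hmin⟩ => ⟨hl, le_antisymm ?_ (Nat.sInf_le ⟨l, hl, rfl⟩)⟩⟩
  exact le_csInf ⟨_, l, hl, rfl⟩ fun _ ⟨l', hl', hk⟩ => hk ▸ hmin l' hl'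

theorem Mor.exists_isReduced (w : Mor C) : ∃ l, IsReduced w l := by
  obtain ⟨l, hl⟩ := w.spec
  obtain ⟨l', hl', hlen⟩ := Nat.sInf_mem (s := {k | ∃ l, Realizes w l ∧ l.length = k})
    ⟨_, l, hl, rfl⟩
  exact ⟨l', hl', hlen⟩

theorem isReduced_wordMor_iff {x : A} {l : List I} :
    IsReduced (C.wordMor x l) l ↔ ∀ l', C.wordMor x l' = C.wordMor x l → l.length ≤ l'.length := by
  simp only [isReduced_iff, realizes_wordMor_iff, true_and]

theorem IsReduced.of_append {x : A} {X Y : List I}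
    (h : IsReduced (C.wordMor x (X ++ Y)) (X ++ Y)) :
    IsReduced (C.wordMor (C.wordTarget x Y) X) X := by
  rw [isReduced_wordMor_iff] at h ⊢
  intro X' hX'
  simpa using h (X' ++ Y) (wordMor_append_left hX')

theorem IsReduced.of_wordMor_eq {x : A} {l l' : List I} (h : IsReduced (C.wordMor x l) l)
    (heq : C.wordMor x l = C.wordMor x l') (hlen : l'.length = l.length) :
    IsReduced (C.wordMor x l') l' := by
  rw [isReduced_wordMor_iff] at h ⊢
  exact fun l'' hl'' => hlen ▸ h l'' (hl''.trans heq.symm)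

theorem IsFRS.wordMor_altWord_comm (hC : C.IsFRS) {x : A} {i j : I} (hij : i ≠ j) {M : ℕ}
    (hM : C.IsChainLength x i j M) : C.wordMor x (altWord j i M) = C.wordMor x (altWord i j M) :=
  wordMor_eq_iff.mpr ⟨hC.wordMap_altWord_comm hij hM, hC.wordTarget_altWord_comm hij hM⟩

variable (C)

/-- The exchange condition for reduced words of length less than `n`. -/
def ExchangeBelow (n : ℕ) : Prop :=
  ∀ (x : A) (m : List I) (j : I), m.length < n → IsReduced (C.wordMor x m) m →
    C.wordMap x m (Pi.single j 1) ≤ 0 →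
      ∃ p, C.wordMor x m = C.wordMor x (p ++ [j]) ∧ p.length + 1 = m.length

variable {C}

theorem IsFRS.nonneg_wordMap_single_of_isReduced (hC : C.IsFRS) {n : ℕ} (hex : C.ExchangeBelow n)
    {x : A} {m : List I} {j : I} (hlen : m.length < n)
    (hred : IsReduced (C.wordMor x (m ++ [j])) (m ++ [j])) :
    0 ≤ C.wordMap (C.ρ j x) m (Pi.single j 1) := by
  refine (hC.nonneg_or_nonpos (C.wordMap_mem_roots (C.single_mem_roots _ j) m)).resolve_right
    fun hm => ?_
  -- exchanging would make `m ++ [j]` equivalent to a word `p ++ [j, j]`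
  obtain ⟨p, hp, hplen⟩ := hex _ m j hlen hred.of_append hm
  have hcancel : C.wordMor x (m ++ [j]) = C.wordMor x p := by
    rw [wordMor_append_left hp, List.append_assoc]
    exact wordMor_append_pair x p j
  have := isReduced_wordMor_iff.mp hred p hcancel.symm
  simp only [List.length_append, List.length_singleton] at this
  omega

theorem exists_wordMor_eq_append_altWord {n : ℕ} (hex : C.ExchangeBelow n)
    {x : A} {i j : I} (hij : i ≠ j) {M : ℕ} (hM : C.IsChainLength x i j M) {m : List I}
    (hlen : m.length < n) (hred : IsReduced (C.wordMor x (m ++ [i])) (m ++ [i]))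
    (hi : C.wordMap x (m ++ [i]) (Pi.single i 1) ≤ 0)
    (hj : C.wordMap x (m ++ [i]) (Pi.single j 1) ≤ 0) {r : ℕ} (hr : 1 ≤ r) (hrM : r ≤ M) :
    ∃ p, C.wordMor x (m ++ [i]) = C.wordMor x (p ++ altWord i j r) ∧
      p.length + r = m.length + 1 := by
  induction r, hr using Nat.le_induction with
  | base => exact ⟨m, rfl, rfl⟩
  | succ r hr ih =>
    obtain ⟨p, hp, hplen⟩ := ih (by omega)
    -- the word sends the positive root `β_r` to a negative root, so `p` has a descent at `l_r`
    have hdesc : C.wordMap (C.wordTarget x (altWord i j r)) p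
        (Pi.single (altLetter i j r) 1) ≤ 0 := by
      have := C.wordMap_nonpos_of_nonneg hij hi hj (hM.1 r (by omega))
        fun k hk => C.altRoot_apply_of_notMem x r hk
      rwa [(wordMor_eq_iff.mp hp).1, wordMap_append, Function.comp_apply,
        wordMap_altWord_altRoot] at this
    have hredp := (hred.of_wordMor_eq hp (by
      simp only [List.length_append, length_altWord, List.length_singleton]; omega)).of_append
    obtain ⟨q, hq, hqlen⟩ := hex _ p _ (by omega) hredp hdesc
    refine ⟨q, hp.trans ((wordMor_append_left hq).trans ?_), by omega⟩
    rw [List.append_assoc]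
    rfl

theorem IsFRS.exchangeBelow_succ (hC : C.IsFRS) {n : ℕ} (hex : C.ExchangeBelow n) :
    C.ExchangeBelow (n + 1) := by
  intro x m j hlen hred hj
  rcases List.eq_nil_or_concat' m with rfl | ⟨m, i, rfl⟩
  · simpa [wordMap] using hj j
  by_cases hij : i = j
  · exact ⟨m, by rw [hij], by simp⟩
  have hlen' : m.length < n := by simpa using hlen
  have hi : C.wordMap x (m ++ [i]) (Pi.single i 1) ≤ 0 := by
    rw [wordMap_append]
    change C.wordMap (C.ρ i x) m (C.sigma x i (Pi.single i 1)) ≤ 0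
    rw [sigma_single_self, wordMap_neg, neg_nonpos]
    exact hC.nonneg_wordMap_single_of_isReduced hex hlen' hred
  obtain ⟨M, hM⟩ := hC.exists_isChainLength x i j
  obtain ⟨P, rfl⟩ := Nat.exists_eq_succ_of_ne_zero hM.ne_zero
  obtain ⟨p, hp, hplen⟩ :=
    exists_wordMor_eq_append_altWord hex hij hM hlen' hred hi hj (by omega) le_rfl
  refine ⟨p ++ altWord i j P, ?_, ?_⟩
  · rw [hp, ← wordMor_append_right (hC.wordMor_altWord_comm hij hM), altWord_succ_eq_append,
      List.append_assoc]
  · simp only [List.length_append, length_altWord, List.length_singleton] at hplen ⊢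
    omega

theorem IsFRS.exchangeBelow (hC : C.IsFRS) (n : ℕ) : C.ExchangeBelow n := by
  induction n with
  | zero => exact fun _ _ _ h => absurd h (Nat.not_lt_zero _)
  | succ n ih => exact hC.exchangeBelow_succ ih

theorem IsFRS.wordTarget_eq_of_wordMap_eq_id (hC : C.IsFRS) {x : A} {l : List I}
    (h : C.wordMap x l = id) : C.wordTarget x l = x := by
  obtain ⟨l', hl'⟩ := (C.wordMor x l).exists_isReduced
  have heq : C.wordMor x l' = C.wordMor x l := realizes_wordMor_iff.mp hl'.1
  have hred : IsReduced (C.wordMor x l') l' := heq ▸ hl'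
  suffices l' = [] by rw [← (wordMor_eq_iff.mp heq).2, this]; rfl
  rcases List.eq_nil_or_concat' l' with hnil | ⟨m, j, rfl⟩
  · exact hnil
  -- `m` acts as `σ_j`, so it sends `α_j` to a negative root
  have hm : C.wordMap (C.ρ j x) m (Pi.single j 1) = -Pi.single j 1 := by
    have := congrFun ((wordMor_eq_iff.mp heq).1.trans h) (Pi.single j 1)
    rw [wordMap_append] at this
    change C.wordMap (C.ρ j x) m (C.sigma x j (Pi.single j 1)) = Pi.single j 1 at this
    rw [sigma_single_self, wordMap_neg] at this
    exact neg_eq_iff_eq_neg.mp this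
  have := hC.nonneg_wordMap_single_of_isReduced (hC.exchangeBelow _) (Nat.lt_succ_self _) hred j
  simp [hm] at this

end Exchange

end CartanScheme

variable {I A : Type} [Fintype I] [DecidableEq I] [Fintype A] [Nonempty A] [DecidableEq A]

open CartanScheme

/-- If `σ_{i_1}⋯σ_{i_k}^a` with all `i_m ∈ J` restricts to the identity on
`ℤ^J`, then it is the identity morphism `id^a`. -/
theorem word_id_on_span_eq_id (C : CartanScheme I A) (hC : C.IsFRS)
    (J : Set I) (a : A) (l : List I) (hl : ∀ i ∈ l, i ∈ J)
    (hid : ∀ v : I → ℤ, (∀ i, i ∉ J → v i = 0) → C.wordMap a l v = v) :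
    C.wordMap a l = id ∧ C.wordTarget a l = a := by
  have hmap : C.wordMap a l = id := hC.wordMap_eq_id_of_eqOn_span hl hid
  exact ⟨hmap, hC.wordTarget_eq_of_wordMap_eq_id hmap⟩
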